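/- Let X be a topological space. The family of sets B(ε) = {(f,g) ∈ C(X) × C(X) : |f(x) − g(x)| < ε(x) for all x ∈ X}, where ε ranges over the lower semicontinuous functions from X to (0,1), is a base for a uniformity 𝒰_Γ on C(X), the topology induced by 𝒰_Γ is the graph topology τ_Γ, and the uniform space (C(X), 𝒰_Γ) is complete. -/

import Mathlib

/-!
A basic entourage `B(ε)` has as its `f`-ball exactly the set `F_G` of the open tube
`G = {(x, t) : |f x - t| < ε x}` around the graph of `f`, so uniform neighbourhoods are graph-open.
Conversely, every open `G` containing the graph of `f` contains such a tube: after shearing `f`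
to `0`, take `ε x` to be the supremum of the radii `r ≤ 1/2` for which `{z} × (-r, r) ⊆ G` for all
`z` near `x`; this supremum is positive because `G` is open and lower semicontinuous because each
admissible radius is admissible at nearby points. Completeness: constant gauges show that a Cauchy
filter is uniformly Cauchy, hence converges uniformly to a continuous function `φ`, and closing
`|h x - g x| < ε x / 2` under pointwise limits in `g` gives convergence to `φ` in `𝒰_Γ`.
-/

open TopologicalSpace Set Filter Topology Uniformity
open scoped SetRel

/-- The graph of a continuous map, as a subset of `X × Y`. -/
def graphSet {X Y : Type*} [TopologicalSpace X] [TopologicalSpace Y] (f : C(X, Y)) :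
    Set (X × Y) := {p | p.2 = f p.1}

/-- The graph topology `τ_Γ` on `C(X, Y)`, generated by the sets
`F_G = {f | graph f ⊆ G}` for `G` open in `X × Y`. -/
def graphTopology (X Y : Type*) [TopologicalSpace X] [TopologicalSpace Y] :
    TopologicalSpace C(X, Y) :=
  generateFrom {S | ∃ G : Set (X × Y), IsOpen G ∧ S = {f : C(X, Y) | graphSet f ⊆ G}}

theorem lowerSemicontinuous_sSup_of_eventually_mem {α β : Type*} [TopologicalSpace α]
    [ConditionallyCompleteLinearOrder β] {S : α → Set β}
    (hne : ∀ x, (S x).Nonempty) (hbdd : ∀ x, BddAbove (S x))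
    (hloc : ∀ x, ∀ r ∈ S x, ∀ᶠ z in 𝓝 x, r ∈ S z) :
    LowerSemicontinuous fun x => sSup (S x) := by
  intro x c hc
  obtain ⟨r, hr, hcr⟩ := exists_lt_of_lt_csSup (hne x) hc
  filter_upwards [hloc x r hr] with z hz using hcr.trans_le (le_csSup (hbdd z) hz)

section GraphUniformity

variable {X : Type*} [TopologicalSpace X]

def IsGraphGauge (ε : X → ℝ) : Prop :=
  LowerSemicontinuous ε ∧ ∀ x, ε x ∈ Ioo (0 : ℝ) 1

def graphEntourage (ε : X → ℝ) : Set (C(X, ℝ) × C(X, ℝ)) :=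
  {p | ∀ x, |p.1 x - p.2 x| < ε x}

namespace IsGraphGauge

theorem const {c : ℝ} (hc : c ∈ Ioo (0 : ℝ) 1) : IsGraphGauge fun _ : X => c :=
  ⟨lowerSemicontinuous_const, fun _ => hc⟩

theorem min {ε δ : X → ℝ} (hε : IsGraphGauge ε) (hδ : IsGraphGauge δ) :
    IsGraphGauge fun x => min (ε x) (δ x) :=
  ⟨hε.1.inf hδ.1, fun x => ⟨lt_min (hε.2 x).1 (hδ.2 x).1, (min_le_left _ _).trans_lt (hε.2 x).2⟩⟩

theorem half {ε : X → ℝ} (hε : IsGraphGauge ε) : IsGraphGauge fun x => ε x / 2 :=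
  ⟨(continuous_id.div_const 2).comp_lowerSemicontinuous hε.1 fun _ _ h =>
      div_le_div_of_nonneg_right h two_pos.le,
    fun x => ⟨half_pos (hε.2 x).1, (half_lt_self (hε.2 x).1).trans (hε.2 x).2⟩⟩

end IsGraphGauge

theorem graphEntourage_mono {ε δ : X → ℝ} (h : ∀ x, ε x ≤ δ x) :
    graphEntourage ε ⊆ graphEntourage δ :=
  fun _ hp x => (hp x).trans_le (h x)

theorem mk_self_mem_graphEntourage {ε : X → ℝ} (hε : ∀ x, 0 < ε x) (f : C(X, ℝ)) :
    (f, f) ∈ graphEntourage ε :=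
  fun x => by simpa using hε x

theorem swap_mem_graphEntourage {ε : X → ℝ} {p : C(X, ℝ) × C(X, ℝ)} :
    p.swap ∈ graphEntourage ε ↔ p ∈ graphEntourage ε :=
  forall_congr' fun x => by rw [Prod.fst_swap, Prod.snd_swap, abs_sub_comm]

theorem graphEntourage_half_comp_subset (ε : X → ℝ) :
    graphEntourage (fun x => ε x / 2) ○ graphEntourage (fun x => ε x / 2) ⊆ graphEntourage ε := by
  rintro ⟨f, g⟩ ⟨h, hfh, hhg⟩ x
  calc |f x - g x| ≤ |f x - h x| + |h x - g x| := abs_sub_le _ _ _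
    _ < ε x / 2 + ε x / 2 := add_lt_add (hfh x) (hhg x)
    _ = ε x := add_halves _

theorem hasBasis_iInf_graphEntourage :
    (⨅ (ε : X → ℝ) (_ : IsGraphGauge ε), 𝓟 (graphEntourage ε)).HasBasis
      IsGraphGauge graphEntourage :=
  hasBasis_biInf_principal'
    (fun _ hε _ hδ => ⟨_, hε.min hδ, graphEntourage_mono fun _ => min_le_left _ _,
      graphEntourage_mono fun _ => min_le_right _ _⟩)
    ⟨_, IsGraphGauge.const (X := X) (c := 1 / 2) ⟨by norm_num, by norm_num⟩⟩

variable (X) in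
def graphUniformSpace : UniformSpace C(X, ℝ) :=
  .ofCore <| .mk' (⨅ (ε : X → ℝ) (_ : IsGraphGauge ε), 𝓟 (graphEntourage ε))
    (fun _ hr f => by
      obtain ⟨ε, hε, hεr⟩ := hasBasis_iInf_graphEntourage.mem_iff.1 hr
      exact hεr (mk_self_mem_graphEntourage (fun x => (hε.2 x).1) f))
    (fun _ hr => by
      obtain ⟨ε, hε, hεr⟩ := hasBasis_iInf_graphEntourage.mem_iff.1 hr
      exact hasBasis_iInf_graphEntourage.mem_iff.2
        ⟨ε, hε, fun p hp => hεr (swap_mem_graphEntourage.2 hp)⟩)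
    (fun _ hr => by
      obtain ⟨ε, hε, hεr⟩ := hasBasis_iInf_graphEntourage.mem_iff.1 hr
      exact ⟨_, hasBasis_iInf_graphEntourage.mem_of_mem hε.half,
        (graphEntourage_half_comp_subset ε).trans hεr⟩)

theorem graphUniformSpace_hasBasis :
    𝓤[graphUniformSpace X].HasBasis IsGraphGauge graphEntourage :=
  hasBasis_iInf_graphEntourage

theorem graphSet_subset_iff {Y : Type*} [TopologicalSpace Y] {g : C(X, Y)} {G : Set (X × Y)} :
    graphSet g ⊆ G ↔ ∀ x, (x, g x) ∈ G :=
  ⟨fun h x => h rfl, by rintro h ⟨x, t⟩ (rfl : t = g x); exact h x⟩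

theorem ball_graphEntourage (f : C(X, ℝ)) (ε : X → ℝ) :
    UniformSpace.ball f (graphEntourage ε) =
      {g : C(X, ℝ) | graphSet g ⊆ {p : X × ℝ | |f p.1 - p.2| < ε p.1}} := by
  ext g
  exact (graphSet_subset_iff (G := {p : X × ℝ | |f p.1 - p.2| < ε p.1})).symm

theorem isOpen_abs_sub_lt (f : C(X, ℝ)) {ε : X → ℝ} (hε : LowerSemicontinuous ε) :
    IsOpen {p : X × ℝ | |f p.1 - p.2| < ε p.1} := by
  have hlsc : LowerSemicontinuous fun p : X × ℝ => ε p.1 + -|f p.1 - p.2| :=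
    (hε.comp continuous_fst).add
      ((f.continuous.comp continuous_fst).sub continuous_snd).abs.neg.lowerSemicontinuous
  simpa only [preimage, mem_Ioi, ← sub_eq_add_neg, sub_pos] using hlsc.isOpen_preimage 0

theorem exists_isGraphGauge_abs_lt_subset {G : Set (X × ℝ)} (hG : IsOpen G)
    (h0 : ∀ x, (x, (0 : ℝ)) ∈ G) :
    ∃ ε, IsGraphGauge ε ∧ {p : X × ℝ | |p.2| < ε p.1} ⊆ G := by
  set S : X → Set ℝ := fun x => {r | r ≤ 1 / 2 ∧ ∀ᶠ z in 𝓝 x, ∀ t, |t| < r → (z, t) ∈ G}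
  have hbdd : ∀ x, BddAbove (S x) := fun x => ⟨1 / 2, fun r hr => hr.1⟩
  have hzero : ∀ x, (0 : ℝ) ∈ S x := fun x =>
    ⟨by norm_num, .of_forall fun _ t ht => absurd ht (abs_nonneg t).not_gt⟩
  have hpos : ∀ x, ∃ r ∈ S x, 0 < r := by
    intro x
    obtain ⟨⟨U, s⟩, ⟨⟨hxU, hU⟩, hs⟩, hUs⟩ :=
      ((nhds_basis_opens x).prod_nhds Metric.nhds_basis_ball).mem_iff.1 (hG.mem_nhds (h0 x))
    refine ⟨min s (1 / 2), ⟨min_le_right _ _, ?_⟩, lt_min hs (by norm_num)⟩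
    filter_upwards [hU.mem_nhds hxU] with z hz t ht
    refine hUs ⟨hz, ?_⟩
    simpa [Real.dist_eq] using ht.trans_le (min_le_left _ _)
  refine ⟨fun x => sSup (S x), ⟨?_, fun x => ⟨?_, ?_⟩⟩, fun ⟨x, t⟩ ht => ?_⟩
  · refine lowerSemicontinuous_sSup_of_eventually_mem (fun x => ⟨0, hzero x⟩) hbdd ?_
    rintro x r ⟨hr, hev⟩
    filter_upwards [hev.eventually_nhds] with z hz using ⟨hr, hz⟩
  · obtain ⟨r, hr, hr0⟩ := hpos x
    exact hr0.trans_le (le_csSup (hbdd x) hr)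
  · exact (csSup_le ⟨0, hzero x⟩ fun r hr => hr.1).trans_lt (by norm_num)
  · obtain ⟨r, ⟨-, hev⟩, htr⟩ := exists_lt_of_lt_csSup ⟨0, hzero x⟩ ht
    exact hev.self_of_nhds t htr

theorem exists_isGraphGauge_abs_sub_lt_subset (f : C(X, ℝ)) {G : Set (X × ℝ)} (hG : IsOpen G)
    (hfG : graphSet f ⊆ G) :
    ∃ ε, IsGraphGauge ε ∧ {p : X × ℝ | |f p.1 - p.2| < ε p.1} ⊆ G := by
  have hG' : IsOpen {p : X × ℝ | (p.1, f p.1 - p.2) ∈ G} :=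
    hG.preimage (continuous_fst.prodMk ((f.continuous.comp continuous_fst).sub continuous_snd))
  obtain ⟨ε, hε, hεG⟩ := exists_isGraphGauge_abs_lt_subset hG' fun x => by
    simpa using graphSet_subset_iff.1 hfG x
  refine ⟨ε, hε, fun p hp => ?_⟩
  simpa using hεG (show (p.1, f p.1 - p.2) ∈ {p : X × ℝ | |p.2| < ε p.1} from hp)

theorem graphUniformSpace_toTopologicalSpace :
    (graphUniformSpace X).toTopologicalSpace = graphTopology X ℝ := by
  have hnhds (f : C(X, ℝ)) :=
    @nhds_basis_uniformity' _ _ (graphUniformSpace X) _ _ graphUniformSpace_hasBasis f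
  refine le_antisymm (le_generateFrom ?_) (TopologicalSpace.le_def.2 fun S hS => ?_)
  · rintro _ ⟨G, hG, rfl⟩
    refine (@isOpen_iff_mem_nhds _ (graphUniformSpace X).toTopologicalSpace _).2 fun f hf =>
      (hnhds f).mem_iff.2 ?_
    obtain ⟨ε, hε, hεG⟩ := exists_isGraphGauge_abs_sub_lt_subset f hG hf
    exact ⟨ε, hε, by rw [ball_graphEntourage]; exact fun g hg => hg.trans hεG⟩
  · refine (@isOpen_iff_forall_mem_open _ (graphTopology X ℝ) S).2 fun f hf => ?_
    obtain ⟨ε, hε, hεS⟩ :=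
      (hnhds f).mem_iff.1 (@IsOpen.mem_nhds _ (graphUniformSpace X).toTopologicalSpace _ _ hS hf)
    refine ⟨_, hεS, ?_, mk_self_mem_graphEntourage (fun x => (hε.2 x).1) f⟩
    rw [ball_graphEntourage]
    exact isOpen_generateFrom_of_mem ⟨_, isOpen_abs_sub_lt f hε.1, rfl⟩

theorem uniformContinuous_graphUniformSpace_toUniformFun :
    UniformContinuous[graphUniformSpace X, _] fun g : C(X, ℝ) => UniformFun.ofFun ⇑g := by
  refine (graphUniformSpace_hasBasis.tendsto_iff
    (UniformFun.hasBasis_uniformity_of_basis X ℝ Metric.uniformity_basis_dist)).2 fun c hc => ?_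
  refine ⟨fun _ => min c (1 / 2),
    .const ⟨lt_min hc (by norm_num), (min_le_right _ _).trans_lt (by norm_num)⟩, fun p hp x => ?_⟩
  simpa [UniformFun.gen, Real.dist_eq] using (hp x).trans_le (min_le_left _ _)

theorem le_nhds_graphUniformSpace_of_cauchy {F : Filter C(X, ℝ)}
    (hF : @Cauchy _ (graphUniformSpace X) F) {φ : C(X, ℝ)}
    (hφ : ∀ x, Tendsto (fun g : C(X, ℝ) => g x) F (𝓝 (φ x))) :
    F ≤ @nhds _ (graphUniformSpace X).toTopologicalSpace φ := by
  have := hF.1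
  refine (@nhds_basis_uniformity' _ _ (graphUniformSpace X) _ _ graphUniformSpace_hasBasis
    φ).ge_iff.2 fun ε hε => ?_
  obtain ⟨A, hA, hAA⟩ := ((@cauchy_iff _ (graphUniformSpace X) F).1 hF).2 _
    (graphUniformSpace_hasBasis.mem_of_mem hε.half)
  refine mem_of_superset hA fun h hh x => ?_
  have hφx : φ x ∈ Metric.closedBall (h x) (ε x / 2) :=
    Metric.isClosed_closedBall.mem_of_tendsto (hφ x) <| mem_of_superset hA fun g hg => by
      simpa [Real.dist_eq, abs_sub_comm] using (hAA (mk_mem_prod hh hg) x).le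
  have hφx' : |φ x - h x| ≤ ε x / 2 := by simpa [Real.dist_eq] using hφx
  show |φ x - h x| < ε x
  linarith [(hε.2 x).1]

theorem graphUniformSpace_completeSpace : @CompleteSpace C(X, ℝ) (graphUniformSpace X) := by
  refine @CompleteSpace.mk _ (graphUniformSpace X) fun {F} hF => ?_
  obtain ⟨φ, hφ⟩ := CompleteSpace.complete
    (@Cauchy.map _ _ (graphUniformSpace X) _ _ _ hF
      uniformContinuous_graphUniformSpace_toUniformFun)
  have hunif : TendstoUniformly (fun g : C(X, ℝ) => ⇑g) (UniformFun.toFun φ) F :=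
    UniformFun.tendsto_iff_tendstoUniformly.1 hφ
  have := hF.1
  have hcont : Continuous (UniformFun.toFun φ) :=
    hunif.continuous (.of_forall fun g : C(X, ℝ) => g.continuous)
  exact ⟨⟨_, hcont⟩, le_nhds_graphUniformSpace_of_cauchy hF hunif.tendsto_at⟩

end GraphUniformity

/-- the sets
`B(ε) = {(f,g) : |f x - g x| < ε x for all x}`, for `ε : X → (0,1)` lower
semicontinuous, form a base for a uniformity `𝒰_Γ` on `C(X)`; the topology induced
by `𝒰_Γ` is the graph topology `τ_Γ`; and `(C(X), 𝒰_Γ)` is complete. -/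
theorem exists_complete_uniformity_graphTopology (X : Type*) [TopologicalSpace X] :
    ∃ U : UniformSpace C(X, ℝ),
      (@uniformity C(X, ℝ) U).HasBasis
        (fun ε : X → ℝ => LowerSemicontinuous ε ∧ ∀ x, ε x ∈ Set.Ioo (0 : ℝ) 1)
        (fun ε => {p : C(X, ℝ) × C(X, ℝ) | ∀ x, |p.1 x - p.2 x| < ε x}) ∧
      U.toTopologicalSpace = graphTopology X ℝ ∧
      @CompleteSpace C(X, ℝ) U :=
  ⟨graphUniformSpace X, graphUniformSpace_hasBasis, graphUniformSpace_toTopologicalSpace,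
    graphUniformSpace_completeSpace⟩
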